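/- arXiv:1812.01979 — 2 statements merged into one kernel-verified Lean document; each statement's English description precedes it below -/
import Mathlib

section
/- (Corollary 3.5.) One has dβ(ξ) = 0, Ric(X, ξ) = −2n(α₀² + β₀²)η(X) for every X ∈ V, and Qξ = −2n(α₀² + β₀²)ξ. -/
/-!
Since `φ` is `g`-skew, `trace φ = 0`, and `φ² = id - η ⊗ ξ` has trace `2n`; tracing the
trans-para-Sasakian identity therefore expresses `Ric(X, ξ)` through `dα (φ X)` and `dβ`.
The gradient condition `φ A = -(2n-1) B` gives `η B = 0`, i.e. `dβ ξ = 0`, and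
`dα ∘ φ = (2n-1) dβ`, and with these the `dα`, `dβ` terms cancel. For `Qξ` one needs `Ric(ξ, ·)`:
the curvature symmetries make `X ↦ R X Y Z` and `X ↦ R X Z Y` adjoint for `g`, and adjoint
endomorphisms have the same trace, so `Ric` is symmetric.
-/

/-- The Ricci tensor: `Ric R Y Z` is the trace of the linear map `X ↦ R X Y Z`. -/
noncomputable def Ric {V : Type*} [AddCommGroup V] [Module ℝ V]
    (R : V →ₗ[ℝ] V →ₗ[ℝ] V →ₗ[ℝ] V) (Y Z : V) : ℝ :=
  LinearMap.trace ℝ V ((LinearMap.applyₗ Z).comp (R.flip Y))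

open LinearMap

namespace LinearMap.BilinForm

variable {K V : Type*} [Field K] [AddCommGroup V] [Module K V] [FiniteDimensional K V]
  {B : LinearMap.BilinForm K V}

theorem trace_eq_of_isAdjointPair (hB : B.Nondegenerate) {f f' : Module.End K V}
    (h : IsAdjointPair B B f f') : trace K V f = trace K V f' := by
  set e := B.flip.toDual hB.flip
  have : Module.Dual.transpose (R := K) f = e.conj f' := by
    ext ℓ X
    obtain ⟨W, rfl⟩ := e.surjective ℓ
    simp only [e, LinearEquiv.conj_apply_apply, LinearEquiv.symm_apply_apply, toDual_def,
      Module.Dual.transpose_apply, coe_comp, Function.comp_apply, flip_apply]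
    exact h X W
  rw [← trace_transpose', this, trace_conj']

theorem trace_eq_zero_of_isSkewAdjoint [CharZero K] (hB : B.Nondegenerate) {f : Module.End K V}
    (h : B.IsSkewAdjoint f) : trace K V f = 0 := by
  have := trace_eq_of_isAdjointPair (f' := -f) hB h
  rw [map_neg] at this
  exact self_eq_neg.mp this

end LinearMap.BilinForm

theorem Ric_comm {V : Type*} [AddCommGroup V] [Module ℝ V] [FiniteDimensional ℝ V]
    {g : LinearMap.BilinForm ℝ V} {R : V →ₗ[ℝ] V →ₗ[ℝ] V →ₗ[ℝ] V}
    (hg_symm : ∀ X Y : V, g X Y = g Y X) (hg : g.Nondegenerate)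
    (hR_a1 : ∀ X Y Z W : V, g (R X Y Z) W = - g (R Y X Z) W)
    (hR_a2 : ∀ X Y Z W : V, g (R X Y Z) W = - g (R X Y W) Z)
    (hR_pair : ∀ X Y Z W : V, g (R X Y Z) W = g (R Z W X) Y) (Y Z : V) :
    Ric R Y Z = Ric R Z Y :=
  LinearMap.BilinForm.trace_eq_of_isAdjointPair hg fun X W => by
    simp only [coe_comp, Function.comp_apply, flip_apply, applyₗ_apply_apply]
    rw [hg_symm X, hR_pair W Z Y X, hR_a1 Y X W Z, hR_a2 X Y W Z, neg_neg]

namespace AlmostParacontactMetric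

variable {V : Type*} [AddCommGroup V] [Module ℝ V]
  {g : LinearMap.BilinForm ℝ V} {φ : V →ₗ[ℝ] V} {ξ : V} {η : V →ₗ[ℝ] ℝ}

theorem apply_reeb (hφξ : φ ξ = 0) (hηξ : η ξ = 1)
    (hgφ : ∀ X Y : V, g (φ X) (φ Y) = - g X Y + η X * η Y) (X : V) : g X ξ = η X := by
  have h := hgφ X ξ
  rw [hφξ, map_zero, hηξ, mul_one] at h
  linarith

theorem isSkewAdjoint (hφξ : φ ξ = 0) (hηφ : ∀ X : V, η (φ X) = 0) (hηξ : η ξ = 1)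
    (hφ2 : ∀ X : V, φ (φ X) = X - η X • ξ)
    (hgφ : ∀ X Y : V, g (φ X) (φ Y) = - g X Y + η X * η Y) : g.IsSkewAdjoint φ := by
  intro X Y
  have h := hgφ X (φ Y)
  rw [hφ2, map_sub, map_smul, smul_eq_mul, apply_reeb hφξ hηξ hgφ, hηφ, hηφ] at h
  rw [Pi.neg_apply, map_neg]
  linarith

theorem trace_phi_comp_phi [FiniteDimensional ℝ V] (hηξ : η ξ = 1)
    (hφ2 : ∀ X : V, φ (φ X) = X - η X • ξ) :
    trace ℝ V (φ ∘ₗ φ) = Module.finrank ℝ V - 1 := by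
  have : φ ∘ₗ φ = LinearMap.id - η.smulRight ξ := by
    ext X
    simp [hφ2 X]
  rw [this, map_sub, trace_id, trace_smulRight, hηξ]

theorem eta_eq_zero_of_phi_eq_neg_smul (hηφ : ∀ X : V, η (φ X) = 0) {A B : V} {c : ℝ}
    (hc : c ≠ 0) (h : φ A = -(c • B)) : η B = 0 := by
  have := hηφ A
  rw [h, map_neg, map_smul, smul_eq_mul, neg_eq_zero] at this
  exact (mul_eq_zero.mp this).resolve_left hc

theorem apply_phi_eq_of_phi_eq_neg_smul (hφ : g.IsSkewAdjoint φ) {A B : V} {c : ℝ}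
    (h : φ A = -(c • B)) (Y : V) : g A (φ Y) = c * g B Y := by
  have := hφ A Y
  rw [h, Pi.neg_apply, map_neg, map_neg, map_smul, LinearMap.neg_apply, LinearMap.smul_apply,
    smul_eq_mul] at this
  linarith

end AlmostParacontactMetric

namespace TransParaSasakian

variable {V : Type*} [AddCommGroup V] [Module ℝ V] [FiniteDimensional ℝ V]
  {g : LinearMap.BilinForm ℝ V} {φ : V →ₗ[ℝ] V} {ξ : V} {η : V →ₗ[ℝ] ℝ}
  {R : V →ₗ[ℝ] V →ₗ[ℝ] V →ₗ[ℝ] V} {α₀ β₀ : ℝ} {dα dβ : V →ₗ[ℝ] ℝ}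

theorem Ric_apply_reeb (htrφ : trace ℝ V φ = 0) (hηφ : ∀ X : V, η (φ X) = 0)
    (hηξ : η ξ = 1) (hφ2 : ∀ X : V, φ (φ X) = X - η X • ξ)
    (hTPS : ∀ X Y : V, R X Y ξ =
      -((α₀ ^ 2 + β₀ ^ 2) • (η Y • X - η X • Y))
      - (2 * α₀ * β₀) • (η Y • φ X - η X • φ Y)
      - dα X • φ Y + dα Y • φ X + dβ Y • φ (φ X) - dβ X • φ (φ Y)) (X : V) :
    Ric R X ξ = -((Module.finrank ℝ V - 1) * (α₀ ^ 2 + β₀ ^ 2)) * η X - dα (φ X)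
      + (Module.finrank ℝ V - 1) * dβ X - dβ (φ (φ X)) := by
  have hmap : (applyₗ ξ).comp (R.flip X) =
      -((α₀ ^ 2 + β₀ ^ 2) • (η X • LinearMap.id - η.smulRight X))
      - (2 * α₀ * β₀) • (η X • φ - η.smulRight (φ X))
      - dα.smulRight (φ X) + dα X • φ + dβ X • (φ ∘ₗ φ) - dβ.smulRight (φ (φ X)) := by
    ext Z
    simpa using hTPS Z X
  rw [Ric, hmap]
  simp only [map_add, map_sub, map_neg, map_smul, trace_id, trace_smulRight, htrφ, hηφ,
    AlmostParacontactMetric.trace_phi_comp_phi hηξ hφ2, smul_eq_mul]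
  ring

end TransParaSasakian

open AlmostParacontactMetric TransParaSasakian

theorem stmt_8_general
    (n : ℕ)
    (V : Type*) [AddCommGroup V] [Module ℝ V] [FiniteDimensional ℝ V]
    (hdim : Module.finrank ℝ V = 2 * n + 1)
    (g : LinearMap.BilinForm ℝ V)
    (hg_symm : ∀ X Y : V, g X Y = g Y X)
    (hg_nondeg : g.Nondegenerate)
    (φ : V →ₗ[ℝ] V) (ξ : V) (η : V →ₗ[ℝ] ℝ)
    (hφξ : φ ξ = 0) (hηφ : ∀ X : V, η (φ X) = 0)
    (hηξ : η ξ = 1) (hφ2 : ∀ X : V, φ (φ X) = X - η X • ξ)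
    (hgφ : ∀ X Y : V, g (φ X) (φ Y) = - g X Y + η X * η Y)
    (R : V →ₗ[ℝ] V →ₗ[ℝ] V →ₗ[ℝ] V)
    (hR_a1 : ∀ X Y Z W : V, g (R X Y Z) W = - g (R Y X Z) W)
    (hR_a2 : ∀ X Y Z W : V, g (R X Y Z) W = - g (R X Y W) Z)
    (hR_pair : ∀ X Y Z W : V, g (R X Y Z) W = g (R Z W X) Y)
    (α₀ β₀ : ℝ) (dα dβ : V →ₗ[ℝ] ℝ)
    (hTPS : ∀ X Y : V, R X Y ξ =
      -((α₀ ^ 2 + β₀ ^ 2) • (η Y • X - η X • Y))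
      - (2 * α₀ * β₀) • (η Y • φ X - η X • φ Y)
      - dα X • φ Y + dα Y • φ X + dβ Y • φ (φ X) - dβ X • φ (φ Y))
    (Qop : V →ₗ[ℝ] V) (hQ : ∀ X Y : V, g (Qop X) Y = Ric R X Y)
    (A B : V) (hA : ∀ X : V, g A X = dα X) (hB : ∀ X : V, g B X = dβ X)
    (hgrad : φ A = -((2 * (n : ℝ) - 1) • B))
    :
    dβ ξ = 0 ∧
    (∀ X : V, Ric R X ξ = -(2 * (n : ℝ) * (α₀ ^ 2 + β₀ ^ 2)) * η X) ∧
    Qop ξ = -(2 * (n : ℝ) * (α₀ ^ 2 + β₀ ^ 2)) • ξ := by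
  have hc : 2 * (n : ℝ) - 1 ≠ 0 := sub_ne_zero.mpr (by norm_cast; omega)
  have hφ : g.IsSkewAdjoint φ := isSkewAdjoint hφξ hηφ hηξ hφ2 hgφ
  have hdβξ : dβ ξ = 0 := by
    rw [← hB, apply_reeb hφξ hηξ hgφ, eta_eq_zero_of_phi_eq_neg_smul hηφ hc hgrad]
  have hRic : ∀ X : V, Ric R X ξ = -(2 * (n : ℝ) * (α₀ ^ 2 + β₀ ^ 2)) * η X := by
    intro X
    rw [Ric_apply_reeb (g.trace_eq_zero_of_isSkewAdjoint hg_nondeg hφ) hηφ hηξ hφ2 hTPS, ← hA,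
      apply_phi_eq_of_phi_eq_neg_smul hφ hgrad, hB, hφ2, map_sub, map_smul, hdβξ, hdim]
    push_cast
    ring
  refine ⟨hdβξ, hRic, sub_eq_zero.mp (hg_nondeg.1 _ fun W => ?_)⟩
  rw [map_sub, map_smul, LinearMap.sub_apply, LinearMap.smul_apply, hQ,
    Ric_comm hg_symm hg_nondeg hR_a1 hR_a2 hR_pair, hRic, hg_symm, apply_reeb hφξ hηξ hgφ,
    smul_eq_mul, sub_self]

theorem stmt_8
    (n : ℕ) (hn : 1 ≤ n)
    (V : Type*) [AddCommGroup V] [Module ℝ V] [FiniteDimensional ℝ V]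
    (hdim : Module.finrank ℝ V = 2 * n + 1)
    (g : LinearMap.BilinForm ℝ V)
    (hg_symm : ∀ X Y : V, g X Y = g Y X)
    (hg_nondeg : g.Nondegenerate)
    (φ : V →ₗ[ℝ] V) (ξ : V) (η : V →ₗ[ℝ] ℝ)
    (hφξ : φ ξ = 0) (hηφ : ∀ X : V, η (φ X) = 0)
    (hηξ : η ξ = 1) (hφ2 : ∀ X : V, φ (φ X) = X - η X • ξ)
    (hgφ : ∀ X Y : V, g (φ X) (φ Y) = - g X Y + η X * η Y)
    (R : V →ₗ[ℝ] V →ₗ[ℝ] V →ₗ[ℝ] V)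
    (hR_a1 : ∀ X Y Z W : V, g (R X Y Z) W = - g (R Y X Z) W)
    (hR_a2 : ∀ X Y Z W : V, g (R X Y Z) W = - g (R X Y W) Z)
    (hR_pair : ∀ X Y Z W : V, g (R X Y Z) W = g (R Z W X) Y)
    (α₀ β₀ : ℝ) (dα dβ : V →ₗ[ℝ] ℝ)
    (hTPS : ∀ X Y : V, R X Y ξ =
      -((α₀ ^ 2 + β₀ ^ 2) • (η Y • X - η X • Y))
      - (2 * α₀ * β₀) • (η Y • φ X - η X • φ Y)
      - dα X • φ Y + dα Y • φ X + dβ Y • φ (φ X) - dβ X • φ (φ Y))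
    (Qop : V →ₗ[ℝ] V) (hQ : ∀ X Y : V, g (Qop X) Y = Ric R X Y)
    (scal : ℝ) (hscal : scal = LinearMap.trace ℝ V Qop)
    (A B : V) (hA : ∀ X : V, g A X = dα X) (hB : ∀ X : V, g B X = dβ X)
    (hgrad : φ A = -((2 * (n : ℝ) - 1) • B))
    :
    dβ ξ = 0 ∧
    (∀ X : V, Ric R X ξ = -(2 * (n : ℝ) * (α₀ ^ 2 + β₀ ^ 2)) * η X) ∧
    Qop ξ = -(2 * (n : ℝ) * (α₀ ^ 2 + β₀ ^ 2)) • ξ :=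
  stmt_8_general n V hdim g hg_symm hg_nondeg φ ξ η hφξ hηφ hηξ hφ2 hgφ R hR_a1 hR_a2 hR_pair α₀ β₀
    dα dβ hTPS Qop hQ A B hA hB hgrad
end

section
/- (Theorem 3.12.) If the pseudo-projective curvature tensor vanishes, i.e. P̄(X,Y)Z = 0 for all X, Y, Z ∈ V, then Ric(X,Y) = −2n(α₀² + β₀²)g(X,Y) for all X, Y ∈ V (Einstein) and scal = −2n(2n+1)(α₀² + β₀²). -/
/-!
The flatness condition `P̄ = 0`, paired with `g(·, W)` and symmetrised in `(Z, W)`, kills the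
curvature and scalar-curvature terms (both are skew in `(Z, W)`), leaving the identity that
`Ric(Y,Z) g(X,W) - Ric(X,Z) g(Y,W)` is skew in `(Z, W)`. Contracting it against the unit vector
`ξ` forces `Ric = Ric(ξ,ξ) g`. The constant is read off the trans-para-Sasakian identity:
`X ↦ R(X,ξ)ξ` is `-(α₀² + β₀²)(id - η ⊗ ξ)` plus a multiple of the traceless `φ`, once
`dβ(ξ) = 0`, which follows from `φ(grad α) = -(2n-1) grad β`.
-/

open LinearMap

namespace LinearMap.BilinForm

variable {V : Type*} [AddCommGroup V] [Module ℝ V] {g : LinearMap.BilinForm ℝ V}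

lemma trace_eq_zero_of_isSkewAdjoint_s15 [FiniteDimensional ℝ V] (hg : g.Nondegenerate)
    {φ : V →ₗ[ℝ] V} (hφ : g.IsSkewAdjoint φ) : trace ℝ V φ = 0 := by
  set e := g.toDual hg
  have htranspose : e.symm.conj (Module.Dual.transpose (R := ℝ) φ) = -φ := by
    ext X
    have h : Module.Dual.transpose (R := ℝ) φ (e X) = e (-φ X) := by
      ext Y
      change g X (φ Y) = g (-φ X) Y
      rw [map_neg, LinearMap.neg_apply, hφ X Y, Pi.neg_apply, map_neg, neg_neg]
    simp [LinearEquiv.conj_apply, h]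
  have h := congrArg (trace ℝ V) htranspose
  rw [trace_conj', trace_transpose', map_neg] at h
  linarith

lemma eq_smul_id_of_apply_eq_smul (hg : g.Nondegenerate) {Q : V →ₗ[ℝ] V} {r : ℝ}
    (hQ : ∀ X Y, g (Q X) Y = r * g X Y) : Q = r • LinearMap.id := by
  ext X
  rw [smul_apply, id_apply, ← sub_eq_zero]
  refine hg.1 _ fun Y => ?_
  simp [hQ]

lemma eq_smul_of_skew (hg_symm : ∀ X Y, g X Y = g Y X) (hg : g.Nondegenerate) {ξ : V}
    (hξ : g ξ ξ = 1) {S : LinearMap.BilinForm ℝ V}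
    (hS : ∀ X Y Z W, S Y Z * g X W - S X Z * g Y W = -(S Y W * g X Z - S X W * g Y Z)) :
    ∀ Y Z, S Y Z = S ξ ξ * g Y Z := by
  set r := S ξ ξ
  set T : V →ₗ[ℝ] ℝ := S ξ - r • g ξ
  have hT_apply : ∀ Z, T Z = S ξ Z - r * g ξ Z := fun Z => by simp [T]
  have hgξ : ∀ Y, g Y ξ = g ξ Y := fun Y => hg_symm Y ξ
  have hS_xi : ∀ Y, S Y ξ = r * g ξ Y := fun Y => by
    have h := hS ξ Y ξ ξ
    rw [hξ, hgξ] at h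
    linear_combination h / 2
  have hS_eq : ∀ Y Z, S Y Z = T Z * g ξ Y + r * g Y Z := fun Y Z => by
    have h := hS ξ Y Z ξ
    rw [hξ, hgξ, hS_xi] at h
    rw [hT_apply]
    linear_combination h
  -- Either `T Z = 0`, or `g(·, Z) = g(·, ξ) g(ξ, Z)`: then `Z ∈ ℝξ` by nondegeneracy, and `T ξ = 0`.
  have hT_mul : ∀ Y Z, T Z * (g ξ Y * g ξ Z - g Y Z) = 0 := fun Y Z => by
    have h := hS ξ Y Z Z
    rw [hS_eq Y Z, hS_eq ξ Z, hξ] at h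
    linear_combination h / 2
  have hT : ∀ Z, T Z = 0 := by
    intro Z
    by_contra hTZ
    have hZ : Z = g ξ Z • ξ := by
      rw [← sub_eq_zero]
      refine hg.1 _ fun Y => ?_
      have h := (mul_eq_zero.mp (hT_mul Y Z)).resolve_left hTZ
      rw [map_sub, map_smul, LinearMap.sub_apply, LinearMap.smul_apply, smul_eq_mul, hg_symm Z]
      linear_combination -h
    have hTξ : T ξ = 0 := by rw [hT_apply, hξ, mul_one, sub_self]
    exact hTZ (by rw [hZ, map_smul, hTξ, smul_zero])
  intro Y Z
  rw [hS_eq, hT, zero_mul, zero_add]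

end LinearMap.BilinForm

section

variable {V : Type*} [AddCommGroup V] [Module ℝ V]

structure IsAlmostParacontactMetric (g : LinearMap.BilinForm ℝ V) (φ : V →ₗ[ℝ] V) (ξ : V)
    (η : V →ₗ[ℝ] ℝ) : Prop where
  phi_xi : φ ξ = 0
  eta_phi : ∀ X, η (φ X) = 0
  eta_xi : η ξ = 1
  phi_phi : ∀ X, φ (φ X) = X - η X • ξ
  metric_phi : ∀ X Y, g (φ X) (φ Y) = -g X Y + η X * η Y

def IsTransParaSasakianCurvature (φ : V →ₗ[ℝ] V) (ξ : V) (η : V →ₗ[ℝ] ℝ)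
    (R : V →ₗ[ℝ] V →ₗ[ℝ] V →ₗ[ℝ] V) (α₀ β₀ : ℝ) (dα dβ : V →ₗ[ℝ] ℝ) : Prop :=
  ∀ X Y, R X Y ξ = -((α₀ ^ 2 + β₀ ^ 2) • (η Y • X - η X • Y))
    - (2 * α₀ * β₀) • (η Y • φ X - η X • φ Y)
    - dα X • φ Y + dα Y • φ X + dβ Y • φ (φ X) - dβ X • φ (φ Y)

namespace IsAlmostParacontactMetric

variable {g : LinearMap.BilinForm ℝ V} {φ : V →ₗ[ℝ] V} {ξ : V} {η : V →ₗ[ℝ] ℝ}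

lemma apply_xi (h : IsAlmostParacontactMetric g φ ξ η) (X : V) : g X ξ = η X := by
  have hX := h.metric_phi X ξ
  rw [h.phi_xi, h.eta_xi, map_zero] at hX
  linarith

lemma isSkewAdjoint (h : IsAlmostParacontactMetric g φ ξ η) : g.IsSkewAdjoint φ := by
  intro X Y
  have hXY := h.metric_phi X (φ Y)
  rw [h.phi_phi, h.eta_phi, map_sub, map_smul, smul_eq_mul, h.apply_xi, h.eta_phi] at hXY
  rw [Pi.neg_apply, map_neg]
  linarith

lemma trace_phi [FiniteDimensional ℝ V] (h : IsAlmostParacontactMetric g φ ξ η)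
    (hg : g.Nondegenerate) : trace ℝ V φ = 0 :=
  LinearMap.BilinForm.trace_eq_zero_of_isSkewAdjoint_s15 hg h.isSkewAdjoint

lemma eta_eq_zero_of_phi_eq_smul (h : IsAlmostParacontactMetric g φ ξ η) {A B : V} {c : ℝ}
    (hAB : φ A = c • B) (hc : c ≠ 0) : η B = 0 := by
  have hB := congrArg η hAB
  rw [h.eta_phi, map_smul, smul_eq_mul, eq_comm, mul_eq_zero] at hB
  exact hB.resolve_left hc

end IsAlmostParacontactMetric

noncomputable def ricci (R : V →ₗ[ℝ] V →ₗ[ℝ] V →ₗ[ℝ] V) : LinearMap.BilinForm ℝ V :=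
  LinearMap.mk₂ ℝ (Ric R)
    (fun Y Y' Z => by simp only [Ric, map_add, LinearMap.comp_add])
    (fun c Y Z => by simp only [Ric, map_smul, LinearMap.comp_smul, smul_eq_mul])
    (fun Y Z Z' => by simp only [Ric, map_add, LinearMap.add_comp])
    (fun c Y Z => by simp only [Ric, map_smul, LinearMap.smul_comp, smul_eq_mul])

lemma skew_of_pseudoProjective_eq_zero {g : LinearMap.BilinForm ℝ V} {R : V → V → V → V}
    (hR : ∀ X Y Z W, g (R X Y Z) W = -g (R X Y W) Z) {S : V → V → ℝ} {p q c : ℝ} (hq : q ≠ 0)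
    (hflat : ∀ X Y Z, p • R X Y Z + q • (S Y Z • X - S X Z • Y) - c • (g Y Z • X - g X Z • Y) = 0)
    (X Y Z W : V) :
    S Y Z * g X W - S X Z * g Y W = -(S Y W * g X Z - S X W * g Y Z) := by
  have hpair : ∀ Z W, p * g (R X Y Z) W + q * (S Y Z * g X W - S X Z * g Y W)
      - c * (g Y Z * g X W - g X Z * g Y W) = 0 := fun Z W => by
    simpa using congrArg (g · W) (hflat X Y Z)
  have hq_mul : q * (S Y Z * g X W - S X Z * g Y W + (S Y W * g X Z - S X W * g Y Z)) = 0 := by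
    linear_combination hpair Z W + hpair W Z - p * hR X Y Z W
  linear_combination (mul_eq_zero.mp hq_mul).resolve_left hq

lemma IsTransParaSasakianCurvature.ric_xi_xi [FiniteDimensional ℝ V]
    {g : LinearMap.BilinForm ℝ V} {φ : V →ₗ[ℝ] V} {ξ : V} {η : V →ₗ[ℝ] ℝ}
    {R : V →ₗ[ℝ] V →ₗ[ℝ] V →ₗ[ℝ] V} {α₀ β₀ : ℝ} {dα dβ : V →ₗ[ℝ] ℝ}
    (hR : IsTransParaSasakianCurvature φ ξ η R α₀ β₀ dα dβ)
    (hapm : IsAlmostParacontactMetric g φ ξ η) (hg : g.Nondegenerate) (hdβ : dβ ξ = 0) :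
    Ric R ξ ξ = -(((Module.finrank ℝ V : ℝ) - 1) * (α₀ ^ 2 + β₀ ^ 2)) := by
  have hop : (applyₗ ξ).comp (R.flip ξ) = (-(α₀ ^ 2 + β₀ ^ 2)) • (LinearMap.id - η.smulRight ξ)
      + (dα ξ - 2 * α₀ * β₀) • φ := by
    ext X
    have h := hR X ξ
    rw [hapm.phi_xi, hapm.eta_xi, hdβ] at h
    simp only [LinearMap.comp_apply, LinearMap.flip_apply, LinearMap.applyₗ_apply_apply,
      LinearMap.add_apply, LinearMap.smul_apply, LinearMap.sub_apply, LinearMap.id_apply,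
      LinearMap.smulRight_apply, h, map_zero]
    module
  change trace ℝ V ((applyₗ ξ).comp (R.flip ξ)) = _
  rw [hop, map_add, map_smul, map_smul, map_sub, hapm.trace_phi hg, trace_smulRight, trace_id,
    hapm.eta_xi, smul_eq_mul, smul_eq_mul]
  ring

end

theorem stmt_15_general
    (n : ℕ) (hn : 1 ≤ n)
    (V : Type*) [AddCommGroup V] [Module ℝ V] [FiniteDimensional ℝ V]
    (hdim : Module.finrank ℝ V = 2 * n + 1)
    (g : LinearMap.BilinForm ℝ V)
    (hg_symm : ∀ X Y : V, g X Y = g Y X)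
    (hg_nondeg : g.Nondegenerate)
    (φ : V →ₗ[ℝ] V) (ξ : V) (η : V →ₗ[ℝ] ℝ)
    (hφξ : φ ξ = 0) (hηφ : ∀ X : V, η (φ X) = 0)
    (hηξ : η ξ = 1) (hφ2 : ∀ X : V, φ (φ X) = X - η X • ξ)
    (hgφ : ∀ X Y : V, g (φ X) (φ Y) = - g X Y + η X * η Y)
    (R : V →ₗ[ℝ] V →ₗ[ℝ] V →ₗ[ℝ] V)
    (hR_a2 : ∀ X Y Z W : V, g (R X Y Z) W = - g (R X Y W) Z)
    (α₀ β₀ : ℝ) (dα dβ : V →ₗ[ℝ] ℝ)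
    (hTPS : ∀ X Y : V, R X Y ξ =
      -((α₀ ^ 2 + β₀ ^ 2) • (η Y • X - η X • Y))
      - (2 * α₀ * β₀) • (η Y • φ X - η X • φ Y)
      - dα X • φ Y + dα Y • φ X + dβ Y • φ (φ X) - dβ X • φ (φ Y))
    (Qop : V →ₗ[ℝ] V) (hQ : ∀ X Y : V, g (Qop X) Y = Ric R X Y)
    (scal : ℝ) (hscal : scal = LinearMap.trace ℝ V Qop)
    (A B : V) (hB : ∀ X : V, g B X = dβ X)
    (hgrad : φ A = -((2 * (n : ℝ) - 1) • B))
    (p q : ℝ) (hq : q ≠ 0)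
    (Pbar : V → V → V → V)
    (hPbar : ∀ X Y Z : V, Pbar X Y Z = p • R X Y Z
      + q • (Ric R Y Z • X - Ric R X Z • Y)
      - ((p + 2 * (n : ℝ) * q) * scal / (2 * (n : ℝ) * (2 * (n : ℝ) + 1))) •
        (g Y Z • X - g X Z • Y))
    (hflat : ∀ X Y Z : V, Pbar X Y Z = 0)
    :
    (∀ X Y : V, Ric R X Y = -(2 * (n : ℝ) * (α₀ ^ 2 + β₀ ^ 2)) * g X Y) ∧ scal = -(2 * (n : ℝ) * (2 * (n : ℝ) + 1) * (α₀ ^ 2 + β₀ ^ 2)) := by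
  have hapm : IsAlmostParacontactMetric g φ ξ η := ⟨hφξ, hηφ, hηξ, hφ2, hgφ⟩
  have hc : -(2 * (n : ℝ) - 1) ≠ 0 := by
    have : (1 : ℝ) ≤ n := by exact_mod_cast hn
    linarith
  have hdβ : dβ ξ = 0 := by
    rw [← hB, hapm.apply_xi]
    exact hapm.eta_eq_zero_of_phi_eq_smul (hgrad.trans (neg_smul _ B).symm) hc
  have hric_xi : Ric R ξ ξ = -(2 * (n : ℝ) * (α₀ ^ 2 + β₀ ^ 2)) := by
    rw [IsTransParaSasakianCurvature.ric_xi_xi hTPS hapm hg_nondeg hdβ, hdim]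
    push_cast
    ring
  have hskew := skew_of_pseudoProjective_eq_zero hR_a2 hq
    fun X Y Z => (hPbar X Y Z).symm.trans (hflat X Y Z)
  have hEinstein : ∀ X Y : V, Ric R X Y = -(2 * (n : ℝ) * (α₀ ^ 2 + β₀ ^ 2)) * g X Y := by
    intro X Y
    rw [← hric_xi]
    exact LinearMap.BilinForm.eq_smul_of_skew (S := ricci R) hg_symm hg_nondeg
      ((hapm.apply_xi ξ).trans hηξ) hskew X Y
  refine ⟨hEinstein, ?_⟩
  rw [hscal, LinearMap.BilinForm.eq_smul_id_of_apply_eq_smul hg_nondeg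
    fun X Y => (hQ X Y).trans (hEinstein X Y), map_smul, trace_id, hdim, smul_eq_mul]
  push_cast
  ring

theorem stmt_15
    (n : ℕ) (hn : 1 ≤ n)
    (V : Type*) [AddCommGroup V] [Module ℝ V] [FiniteDimensional ℝ V]
    (hdim : Module.finrank ℝ V = 2 * n + 1)
    (g : LinearMap.BilinForm ℝ V)
    (hg_symm : ∀ X Y : V, g X Y = g Y X)
    (hg_nondeg : g.Nondegenerate)
    (φ : V →ₗ[ℝ] V) (ξ : V) (η : V →ₗ[ℝ] ℝ)
    (hφξ : φ ξ = 0) (hηφ : ∀ X : V, η (φ X) = 0)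
    (hηξ : η ξ = 1) (hφ2 : ∀ X : V, φ (φ X) = X - η X • ξ)
    (hgφ : ∀ X Y : V, g (φ X) (φ Y) = - g X Y + η X * η Y)
    (R : V →ₗ[ℝ] V →ₗ[ℝ] V →ₗ[ℝ] V)
    (hR_a1 : ∀ X Y Z W : V, g (R X Y Z) W = - g (R Y X Z) W)
    (hR_a2 : ∀ X Y Z W : V, g (R X Y Z) W = - g (R X Y W) Z)
    (hR_pair : ∀ X Y Z W : V, g (R X Y Z) W = g (R Z W X) Y)
    (α₀ β₀ : ℝ) (dα dβ : V →ₗ[ℝ] ℝ)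
    (hTPS : ∀ X Y : V, R X Y ξ =
      -((α₀ ^ 2 + β₀ ^ 2) • (η Y • X - η X • Y))
      - (2 * α₀ * β₀) • (η Y • φ X - η X • φ Y)
      - dα X • φ Y + dα Y • φ X + dβ Y • φ (φ X) - dβ X • φ (φ Y))
    (Qop : V →ₗ[ℝ] V) (hQ : ∀ X Y : V, g (Qop X) Y = Ric R X Y)
    (scal : ℝ) (hscal : scal = LinearMap.trace ℝ V Qop)
    (A B : V) (hA : ∀ X : V, g A X = dα X) (hB : ∀ X : V, g B X = dβ X)
    (hgrad : φ A = -((2 * (n : ℝ) - 1) • B))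
    (p q : ℝ) (hp : p ≠ 0) (hq : q ≠ 0)
    (Pbar : V → V → V → V)
    (hPbar : ∀ X Y Z : V, Pbar X Y Z = p • R X Y Z
      + q • (Ric R Y Z • X - Ric R X Z • Y)
      - ((p + 2 * (n : ℝ) * q) * scal / (2 * (n : ℝ) * (2 * (n : ℝ) + 1))) •
        (g Y Z • X - g X Z • Y))
    (hflat : ∀ X Y Z : V, Pbar X Y Z = 0)
    :
    (∀ X Y : V, Ric R X Y = -(2 * (n : ℝ) * (α₀ ^ 2 + β₀ ^ 2)) * g X Y) ∧ scal = -(2 * (n : ℝ) * (2 * (n : ℝ) + 1) * (α₀ ^ 2 + β₀ ^ 2)) :=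
  stmt_15_general n hn V hdim g hg_symm hg_nondeg φ ξ η hφξ hηφ hηξ hφ2 hgφ R hR_a2 α₀ β₀ dα dβ hTPS
    Qop hQ scal hscal A B hB hgrad p q hq Pbar hPbar hflat
end
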